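/- (Estimate (5.4): improved second minimum via the uniform exponent ω̂_0.) Let ŵ be a real number with ŵ < ω̂_0(Θ). There exist constants C > 0 and H_0 > 0, depending only on n, Θ and ŵ, with the following property: for every real number ω and every primitive vector X ∈ ℤ^{n+1} with |X| ≥ H_0 and |y ∧ X| ≤ |X|^{−ω}, at which the symmetric convex body C' = {z ∈ ℝ^{n+1} : |z| ≤ |X| and |y ∧ z| ≤ |X|^{−ω}} attains its first successive minimum (with respect to the lattice ℤ^{n+1}) equal to 1, the second successive minimum λ'_2 of C' satisfies λ'_2 ≤ C|X|^{ω − ŵ}. -/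

import Mathlib

open scoped BigOperators Pointwise

noncomputable section

/-- Coordinates of a degree-`r` multivector in `Λ^r(ℝ^{n+1})`, with respect to the
orthonormal basis formed by the wedge products `e_{i₁} ∧ ⋯ ∧ e_{i_r}` (`i₁ < ⋯ < i_r`)
of the standard basis vectors. -/
abbrev MultiVec (n r : ℕ) := {S : Finset (Fin (n + 1)) // S.card = r} → ℝ

/-- The Euclidean norm of a multivector. -/
def mvNorm {n r : ℕ} (X : MultiVec n r) : ℝ :=
  Real.sqrt (∑ S, X S ^ 2)

/-- The Euclidean norm of a vector of `ℝ^{n+1}`. -/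
def vNorm {n : ℕ} (x : Fin (n + 1) → ℝ) : ℝ :=
  Real.sqrt (∑ i, x i ^ 2)

/-- A multivector is integral if all its coordinates (in the basis of wedge products of
standard basis vectors) are integers; this encodes `X ∈ Λ^r(ℤ^{n+1})`. -/
def mvIntegral {n r : ℕ} (X : MultiVec n r) : Prop :=
  ∀ S, ∃ k : ℤ, X S = (k : ℝ)

/-- The wedge product `y ∧ X` of a vector `y ∈ ℝ^{n+1}` with a degree-`r` multivector `X`,
in coordinates. -/
def vWedge {n r : ℕ} (y : Fin (n + 1) → ℝ) (X : MultiVec n r) : MultiVec n (r + 1) :=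
  fun T => ∑ i ∈ T.1.attach,
    (-1 : ℝ) ^ (T.1.filter (· < i.1)).card * y i.1 *
      X ⟨T.1.erase i.1, by rw [Finset.card_erase_of_mem i.2, T.2]; omega⟩

/-- A vector of `ℝ^{n+1}` viewed as a degree-one multivector. -/
def vecToMulti {n : ℕ} (x : Fin (n + 1) → ℝ) : MultiVec n 1 :=
  fun S => ∑ i ∈ S.1, x i

/-- The wedge product `x 0 ∧ ⋯ ∧ x r` of `r` vectors of `ℝ^{n+1}`; its coordinate at an
`r`-element subset `S` is the corresponding `r × r` minor of the matrix whose columns are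
the `x j`. -/
def multiWedge {n r : ℕ} (x : Fin r → Fin (n + 1) → ℝ) : MultiVec n r :=
  fun S => Matrix.det (Matrix.of fun a b : Fin r => x b ((S.1.orderIsoOfFin S.2 a : Fin (n + 1))))

/-- The contraction (internal product) `y ⌟ Z` of a degree-`(r+1)` multivector `Z` by a
vector `y ∈ ℝ^{n+1}`: the unique degree-`r` multivector satisfying
`W · (y ⌟ Z) = (W ∧ y) · Z` for every degree-`r` multivector `W`, written in coordinates. -/
def vContract {n r : ℕ} (y : Fin (n + 1) → ℝ) (Z : MultiVec n (r + 1)) : MultiVec n r :=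
  fun S => ∑ i ∈ (S.1ᶜ).attach,
    (-1 : ℝ) ^ (S.1.filter (fun j => i.1 < j)).card * y i.1 *
      Z ⟨insert i.1 S.1, by
        rw [Finset.card_insert_of_notMem (Finset.mem_compl.mp i.2), S.2]⟩

/-- The point `y = (1, θ₁, …, θₙ) ∈ ℝ^{n+1}` of homogeneous coordinates of `Θ ∈ ℝⁿ`. -/
def yTheta {n : ℕ} (θ : Fin n → ℝ) : Fin (n + 1) → ℝ :=
  Fin.cons 1 θ

/-- The exponent `ω_d(Θ)`: the supremum (in `ℝ ∪ {±∞}`) of the real numbers `ω` for which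
there exist infinitely many nonzero integer multivectors `X ∈ Λ^{d+1}(ℤ^{n+1})` with
`|y ∧ X| ≤ |X|^{-ω}`. -/
def omegaExp (n : ℕ) (θ : Fin n → ℝ) (d : ℕ) : EReal :=
  sSup {w : EReal | ∃ ω : ℝ, w = (ω : EReal) ∧
    {X : MultiVec n (d + 1) | mvIntegral X ∧ X ≠ 0 ∧
      mvNorm (vWedge (yTheta θ) X) ≤ mvNorm X ^ (-ω)}.Infinite}

/-- `max_{0 ≤ i ≤ n} |x_i|` of an integer tuple, as a real number. -/
def maxAbs {n : ℕ} (x : Fin (n + 1) → ℤ) : ℝ :=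
  ((Finset.univ.sup (fun i => (x i).natAbs) : ℕ) : ℝ)

/-- `ω_0(Θ)` (Definition 1): the supremum (in `ℝ ∪ {±∞}`) of the real numbers `ω` for
which there exist infinitely many integer `(n+1)`-tuples `(x₀, …, xₙ)` with
`max_{1 ≤ i ≤ n} |x₀ θ_i - x_i| ≤ (max_{0 ≤ i ≤ n} |x_i|)^{-ω}`. -/
def omega0T (n : ℕ) (θ : Fin n → ℝ) : EReal :=
  sSup {w : EReal | ∃ ω : ℝ, w = (ω : EReal) ∧
    {x : Fin (n + 1) → ℤ |
      ∀ i : Fin n, |(x 0 : ℝ) * θ i - (x i.succ : ℝ)| ≤ maxAbs x ^ (-ω)}.Infinite}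

/-- `ω_{n-1}(Θ)` (Definition 1): the supremum (in `ℝ ∪ {±∞}`) of the real numbers `ω` for
which there exist infinitely many integer `(n+1)`-tuples `(x₀, …, xₙ)` with
`|x₀ + x₁θ₁ + ⋯ + xₙθₙ| ≤ (max_{0 ≤ i ≤ n} |x_i|)^{-ω}`. -/
def omegaLastT (n : ℕ) (θ : Fin n → ℝ) : EReal :=
  sSup {w : EReal | ∃ ω : ℝ, w = (ω : EReal) ∧
    {x : Fin (n + 1) → ℤ |
      |(x 0 : ℝ) + ∑ i : Fin n, (x i.succ : ℝ) * θ i| ≤ maxAbs x ^ (-ω)}.Infinite}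

/-- `ω̂_0(Θ)` (Definition 2). -/
def omegaHat0 (n : ℕ) (θ : Fin n → ℝ) : EReal :=
  sSup {w : EReal | ∃ ω : ℝ, w = (ω : EReal) ∧
    ∀ᶠ X : ℝ in Filter.atTop, ∃ x : Fin (n + 1) → ℤ, x ≠ 0 ∧
      (∀ j, |(x j : ℝ)| ≤ X) ∧
      ∀ i : Fin n, |(x 0 : ℝ) * θ i - (x i.succ : ℝ)| ≤ X ^ (-ω)}

/-- `ω̂_{n-1}(Θ)` (Definition 2). -/
def omegaHatLast (n : ℕ) (θ : Fin n → ℝ) : EReal :=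
  sSup {w : EReal | ∃ ω : ℝ, w = (ω : EReal) ∧
    ∀ᶠ X : ℝ in Filter.atTop, ∃ x : Fin (n + 1) → ℤ, x ≠ 0 ∧
      (∀ j, |(x j : ℝ)| ≤ X) ∧
      |(x 0 : ℝ) + ∑ i : Fin n, (x i.succ : ℝ) * θ i| ≤ X ^ (-ω)}

/-- The `r`-th compound of a subset `C` of `ℝ^{n+1}`: the convex hull in `Λ^r(ℝ^{n+1})`
of the wedge products `z₁ ∧ ⋯ ∧ z_r` of `r` elements of `C`. -/
def compoundBody {n : ℕ} (r : ℕ) (C : Set (Fin (n + 1) → ℝ)) : Set (MultiVec n r) :=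
  convexHull ℝ {Z | ∃ z : Fin r → Fin (n + 1) → ℝ, (∀ j, z j ∈ C) ∧ Z = multiWedge z}

/-- The `k`-th successive minimum of a subset `C` of `ℝ^{n+1}` with respect to the lattice
`ℤ^{n+1}`: the infimum of the `λ > 0` such that `λ • C` contains `k` linearly independent
integer points. -/
def succMin (n : ℕ) (C : Set (Fin (n + 1) → ℝ)) (k : ℕ) : ℝ :=
  sInf {lam : ℝ | 0 < lam ∧ ∃ v : Fin k → Fin (n + 1) → ℤ,
    LinearIndependent ℝ (fun j => fun i => ((v j i : ℝ))) ∧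
    ∀ j, (fun i => ((v j i : ℝ))) ∈ lam • C}

/-!
Since `ŵ < ω̂_0(Θ)`, for `Y = |X| / (2√(n+1))` the definition of `ω̂_0` gives a nonzero
integer `x` with `‖x‖_∞ ≤ Y` and `|x₀θᵢ - xᵢ| ≤ Y^{-ŵ}`; hence `|x| ≤ |X|/2` and
`|y ∧ x| ≪ |X|^{-ŵ}`, i.e. `x ∈ λ C'` with `λ ≍ |X|^{ω - ŵ}`. As `λ'₁ = 1`, this `λ` is at least
`1`, so `X ∈ λ C'` too. Finally `x` is not a multiple of the primitive vector `X`, being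
shorter than it, so `x` and `X` are independent and `λ'₂ ≤ λ`.
-/

namespace Real

theorem sqrt_sum_mul_sq {ι : Type*} [Fintype ι] (c : ℝ) (f : ι → ℝ) :
    √(∑ i, (c * f i) ^ 2) = |c| * √(∑ i, f i ^ 2) := by
  simp_rw [mul_pow, ← Finset.mul_sum, Real.sqrt_mul (sq_nonneg c), Real.sqrt_sq_eq_abs]

theorem sqrt_sum_sq_le_sqrt_card_mul {ι : Type*} [Fintype ι] {f : ι → ℝ} {B : ℝ} (hB : 0 ≤ B)
    (h : ∀ i, |f i| ≤ B) : √(∑ i, f i ^ 2) ≤ √(Fintype.card ι) * B := by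
  have hsum : ∑ i, f i ^ 2 ≤ Fintype.card ι * B ^ 2 := by
    calc ∑ i, f i ^ 2 ≤ ∑ _i : ι, B ^ 2 :=
          Finset.sum_le_sum fun i _ => sq_le_sq' (abs_le.mp (h i)).1 (abs_le.mp (h i)).2
      _ = Fintype.card ι * B ^ 2 := by simp
  calc √(∑ i, f i ^ 2) ≤ √(Fintype.card ι * B ^ 2) := Real.sqrt_le_sqrt hsum
    _ = √(Fintype.card ι) * B := by rw [Real.sqrt_mul (Nat.cast_nonneg _), Real.sqrt_sq hB]

end Real

section Wedge

variable {n : ℕ}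

theorem vNorm_smul (c : ℝ) (z : Fin (n + 1) → ℝ) : vNorm (c • z) = |c| * vNorm z :=
  Real.sqrt_sum_mul_sq c z

theorem mvNorm_vWedge_vecToMulti_smul (y : Fin (n + 1) → ℝ) (c : ℝ) (z : Fin (n + 1) → ℝ) :
    mvNorm (vWedge y (vecToMulti (c • z))) = |c| * mvNorm (vWedge y (vecToMulti z)) := by
  rw [mvNorm, mvNorm, ← Real.sqrt_sum_mul_sq]
  congr 1
  refine Finset.sum_congr rfl fun T _ => ?_
  simp only [vWedge, vecToMulti, Pi.smul_apply, smul_eq_mul, Finset.mul_sum]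
  simp only [mul_left_comm c]

theorem vWedge_vecToMulti_pair (y z : Fin (n + 1) → ℝ) {a b : Fin (n + 1)} (hab : a < b)
    (h : ({a, b} : Finset (Fin (n + 1))).card = 1 + 1) :
    vWedge y (vecToMulti z) ⟨{a, b}, h⟩ = y a * z b - y b * z a := by
  simp only [vWedge, vecToMulti]
  rw [Finset.sum_attach ({a, b} : Finset (Fin (n + 1)))
    (fun i => (-1 : ℝ) ^ (({a, b} : Finset (Fin (n + 1))).filter (· < i)).card * y i *
      ∑ j ∈ ({a, b} : Finset (Fin (n + 1))).erase i, z j)]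
  rw [Finset.sum_pair hab.ne]
  simp [Finset.filter_insert, Finset.filter_singleton, hab, hab.ne, hab.ne', not_lt.mpr hab.le,
    Finset.erase_insert_eq_erase]
  ring

theorem abs_vWedge_vecToMulti_le (y z : Fin (n + 1) → ℝ) (t e : ℝ)
    (hz : ∀ i, |z i - t * y i| ≤ e) (T : {S : Finset (Fin (n + 1)) // S.card = 1 + 1}) :
    |vWedge y (vecToMulti z) T| ≤ 2 * (∑ j, |y j|) * e := by
  have hy : ∀ i, |y i| ≤ ∑ j, |y j| := fun i =>
    Finset.single_le_sum (f := fun j => |y j|) (fun j _ => abs_nonneg _) (Finset.mem_univ i)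
  have hpair : ∀ a b, a < b → (T : Finset (Fin (n + 1))) = {a, b} →
      |vWedge y (vecToMulti z) T| ≤ 2 * (∑ j, |y j|) * e := by
    intro a b hab hT
    obtain ⟨S, hS⟩ := T
    subst hT
    rw [vWedge_vecToMulti_pair y z hab]
    -- the coordinate of `y ∧ z` only sees `z - t • y`
    calc |y a * z b - y b * z a| = |y a * (z b - t * y b) - y b * (z a - t * y a)| := by ring_nf
      _ ≤ |y a| * |z b - t * y b| + |y b| * |z a - t * y a| := by
          rw [← abs_mul, ← abs_mul]; exact abs_sub _ _
      _ ≤ (∑ j, |y j|) * e + (∑ j, |y j|) * e := by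
          gcongr
          exacts [hy a, hz b, hy b, hz a]
      _ = 2 * (∑ j, |y j|) * e := by ring
  obtain ⟨a, b, hne, hT⟩ := Finset.card_eq_two.mp T.2
  rcases hne.lt_or_gt with hab | hba
  · exact hpair a b hab hT
  · exact hpair b a hba (hT.trans (Finset.pair_comm a b))

theorem mvNorm_vWedge_vecToMulti_le (y z : Fin (n + 1) → ℝ) (t e : ℝ)
    (hz : ∀ i, |z i - t * y i| ≤ e) :
    mvNorm (vWedge y (vecToMulti z)) ≤
      √(Fintype.card {S : Finset (Fin (n + 1)) // S.card = 1 + 1}) * (2 * (∑ j, |y j|) * e) :=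
  Real.sqrt_sum_sq_le_sqrt_card_mul
    (by have := (abs_nonneg _).trans (hz 0); positivity) (abs_vWedge_vecToMulti_le y z t e hz)

end Wedge

theorem Finset.exists_int_eq_mul_of_gcd_eq_one {ι : Type*} [Fintype ι] {X x : ι → ℤ}
    (hX : Finset.univ.gcd X = 1) {a : ℝ} (hax : ∀ i, (x i : ℝ) = a * X i) :
    ∃ m : ℤ, ∀ i, x i = m * X i := by
  obtain ⟨i₀, hi₀⟩ : ∃ i₀, X i₀ ≠ 0 := by
    by_contra! h
    simp [Finset.gcd_eq_zero_iff.mpr fun i _ => h i] at hX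
  have hcross : ∀ j, X i₀ * x j = x i₀ * X j := fun j => by
    exact_mod_cast (by rw [hax j, hax i₀]; ring : (X i₀ * x j : ℝ) = x i₀ * X j)
  obtain ⟨m, hm⟩ : X i₀ ∣ x i₀ := by
    have h : X i₀ ∣ Finset.univ.gcd (fun j => x i₀ * X j) :=
      Finset.dvd_gcd fun j _ => ⟨x j, (hcross j).symm⟩
    rwa [Finset.gcd_mul_left, hX, mul_one, dvd_normalize_iff] at h
  exact ⟨m, fun j => mul_left_cancel₀ hi₀ (by rw [hcross j, hm]; ring)⟩

theorem linearIndependent_of_gcd_eq_one_of_vNorm_lt {n : ℕ} {X x : Fin (n + 1) → ℤ}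
    (hX : Finset.univ.gcd X = 1) (hx : x ≠ 0)
    (hlt : vNorm (fun i => (x i : ℝ)) < vNorm (fun i => (X i : ℝ))) :
    LinearIndependent ℝ (fun j i => ((![x, X] j i : ℤ) : ℝ)) := by
  have hXR : (fun i => (X i : ℝ)) ≠ 0 := by
    intro h
    have hX0 : ∀ i, X i = 0 := fun i => by simpa using congrFun h i
    simp [Finset.gcd_eq_zero_iff.mpr fun i _ => hX0 i] at hX
  rw [show (fun j i => ((![x, X] j i : ℤ) : ℝ)) = ![fun i => (x i : ℝ), fun i => (X i : ℝ)] by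
    ext j i; fin_cases j <;> rfl, linearIndependent_fin2]
  refine ⟨hXR, fun a hax => ?_⟩
  obtain ⟨m, hm⟩ := Finset.exists_int_eq_mul_of_gcd_eq_one hX (a := a)
    fun i => (congrFun hax i).symm
  have hm0 : m ≠ 0 := by
    rintro rfl
    exact hx (funext fun i => by simp [hm i])
  have hxm : (fun i => (x i : ℝ)) = (m : ℝ) • fun i => (X i : ℝ) := by
    ext i; simp [hm i]
  rw [hxm, vNorm_smul] at hlt
  have hm1 : 1 ≤ |(m : ℝ)| := by exact_mod_cast Int.one_le_abs hm0
  have hX0 : 0 ≤ vNorm (fun i => (X i : ℝ)) := Real.sqrt_nonneg _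
  nlinarith

section ApproxBody

variable {n : ℕ}

def approxBody (y : Fin (n + 1) → ℝ) (R δ : ℝ) : Set (Fin (n + 1) → ℝ) :=
  {z | vNorm z ≤ R ∧ mvNorm (vWedge y (vecToMulti z)) ≤ δ}

theorem mem_smul_approxBody {y z : Fin (n + 1) → ℝ} {R δ lam : ℝ} (hlam : 0 < lam) :
    z ∈ lam • approxBody y R δ ↔
      vNorm z ≤ lam * R ∧ mvNorm (vWedge y (vecToMulti z)) ≤ lam * δ := by
  rw [Set.mem_smul_set_iff_inv_smul_mem₀ hlam.ne', approxBody, Set.mem_ofPred_eq, vNorm_smul,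
    mvNorm_vWedge_vecToMulti_smul, abs_of_pos (inv_pos.mpr hlam), inv_mul_le_iff₀ hlam,
    inv_mul_le_iff₀ hlam]

theorem succMin_le {C : Set (Fin (n + 1) → ℝ)} {k : ℕ} {lam : ℝ} (hlam : 0 < lam)
    (v : Fin k → Fin (n + 1) → ℤ) (hv : LinearIndependent ℝ (fun j i => (v j i : ℝ)))
    (hmem : ∀ j, (fun i => (v j i : ℝ)) ∈ lam • C) : succMin n C k ≤ lam :=
  csInf_le ⟨0, fun _ h => h.1.le⟩ ⟨hlam, v, hv, hmem⟩

theorem succMin_two_le_of_short_vector {y : Fin (n + 1) → ℝ} {δ lam : ℝ}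
    {X x : Fin (n + 1) → ℤ} (hX : Finset.univ.gcd X = 1)
    (hR : 0 < vNorm (fun i => (X i : ℝ)))
    (hXδ : mvNorm (vWedge y (vecToMulti fun i => (X i : ℝ))) ≤ δ)
    (hmin : succMin n (approxBody y (vNorm fun i => (X i : ℝ)) δ) 1 = 1) (hx : x ≠ 0)
    (hxR : vNorm (fun i => (x i : ℝ)) ≤ vNorm (fun i => (X i : ℝ)) / 2)
    (hxδ : mvNorm (vWedge y (vecToMulti fun i => (x i : ℝ))) ≤ lam * δ) (hlam : 0 < lam) :
    succMin n (approxBody y (vNorm fun i => (X i : ℝ)) δ) 2 ≤ lam := by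
  set R := vNorm fun i => (X i : ℝ)
  have hδ : 0 ≤ δ := (Real.sqrt_nonneg _).trans hXδ
  -- `x` lies in `max (1/2) lam • C'`, so the first minimum forces `lam ≥ 1`
  have hlam1 : 1 ≤ lam := by
    have hx' : (fun i => (x i : ℝ)) ∈ max (1 / 2) lam • approxBody y R δ :=
      (mem_smul_approxBody (by positivity)).2
        ⟨by nlinarith [le_max_left (1 / 2) lam], by nlinarith [le_max_right (1 / 2) lam]⟩
    have h := succMin_le (by positivity) (fun _ : Fin 1 => x)
      (linearIndependent_unique_iff.mpr fun h => hx (funext fun i => by simpa using congrFun h i))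
      fun _ => hx'
    rw [hmin] at h
    rcases le_max_iff.mp h with h | h
    · norm_num at h
    · exact h
  refine succMin_le hlam ![x, X]
    (linearIndependent_of_gcd_eq_one_of_vNorm_lt hX hx (by linarith))
    (Fin.forall_fin_two.2
      ⟨show (fun i => (x i : ℝ)) ∈ _ from (mem_smul_approxBody hlam).2 ⟨by nlinarith, hxδ⟩,
        show (fun i => (X i : ℝ)) ∈ _ from
          (mem_smul_approxBody hlam).2 ⟨by nlinarith, by nlinarith⟩⟩)

end ApproxBody

section Approximation

variable {n : ℕ} {θ : Fin n → ℝ}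

theorem eventually_exists_approx_of_lt_omegaHat0 {w : ℝ} (hw : (w : EReal) < omegaHat0 n θ) :
    ∀ᶠ T : ℝ in Filter.atTop, ∃ x : Fin (n + 1) → ℤ, x ≠ 0 ∧ (∀ j, |(x j : ℝ)| ≤ T) ∧
      ∀ i : Fin n, |(x 0 : ℝ) * θ i - (x i.succ : ℝ)| ≤ T ^ (-w) := by
  obtain ⟨_, ⟨ω, rfl, hω⟩, hwω⟩ := lt_sSup_iff.mp hw
  filter_upwards [hω, Filter.eventually_ge_atTop 1] with T ⟨x, hx0, hxT, hxθ⟩ hT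
  exact ⟨x, hx0, hxT, fun i => (hxθ i).trans
    (Real.rpow_le_rpow_of_exponent_le hT (neg_le_neg (EReal.coe_lt_coe_iff.mp hwω).le))⟩

theorem exists_short_approx_vector {w : ℝ} (hw : (w : EReal) < omegaHat0 n θ) :
    ∃ C H₀ : ℝ, 0 < C ∧ 0 < H₀ ∧ ∀ R, H₀ ≤ R → ∃ x : Fin (n + 1) → ℤ, x ≠ 0 ∧
      vNorm (fun i => (x i : ℝ)) ≤ R / 2 ∧
      mvNorm (vWedge (yTheta θ) (vecToMulti fun i => (x i : ℝ))) ≤ C * R ^ (-w) := by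
  obtain ⟨T₀, hT₀⟩ := Filter.eventually_atTop.mp (eventually_exists_approx_of_lt_omegaHat0 hw)
  set K := √(Fintype.card {S : Finset (Fin (n + 1)) // S.card = 1 + 1}) *
    (2 * ∑ j, |yTheta θ j|)
  set c := 2 * √((n : ℝ) + 1)
  have hc : 0 < c := by positivity
  refine ⟨max 1 (K * c ^ w), c * max T₀ 1, by positivity, by positivity, fun R hR => ?_⟩
  set Y := R / c
  have hY : max T₀ 1 ≤ Y := (le_div_iff₀ hc).2 (by linarith [mul_comm c (max T₀ 1)])
  have hY0 : 0 < Y := one_pos.trans_le ((le_max_right _ _).trans hY)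
  have hR0 : 0 < R := by simpa [Y, div_pos_iff_of_pos_right hc] using hY0
  obtain ⟨x, hx0, hxY, hxθ⟩ := hT₀ Y ((le_max_left _ _).trans hY)
  refine ⟨x, hx0, ?_, ?_⟩
  · calc vNorm (fun i => (x i : ℝ)) ≤ √(Fintype.card (Fin (n + 1))) * Y :=
          Real.sqrt_sum_sq_le_sqrt_card_mul hY0.le hxY
      _ = R / 2 := by
          simp only [Fintype.card_fin, Nat.cast_add, Nat.cast_one, Y, c]
          field_simp
  · have herr : ∀ i, |(x i : ℝ) - x 0 * yTheta θ i| ≤ Y ^ (-w) := Fin.cases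
      (by simp [yTheta, Real.rpow_nonneg hY0.le]) fun i => by
        simpa [yTheta, abs_sub_comm] using hxθ i
    calc mvNorm (vWedge (yTheta θ) (vecToMulti fun i => (x i : ℝ))) ≤ K * Y ^ (-w) := by
          simpa only [K, mul_assoc] using mvNorm_vWedge_vecToMulti_le _ _ _ _ herr
      _ = K * c ^ w * R ^ (-w) := by
          rw [Real.div_rpow hR0.le hc.le, Real.rpow_neg hc.le, div_inv_eq_mul]; ring
      _ ≤ max 1 (K * c ^ w) * R ^ (-w) := by gcongr; exact le_max_right _ _

end Approximation

theorem estimate_5_4_general (n : ℕ) (θ : Fin n → ℝ)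
    (w_hat : ℝ) (hw_hat : (w_hat : EReal) < omegaHat0 n θ) :
    ∃ C H₀ : ℝ, 0 < C ∧ 0 < H₀ ∧
      ∀ (ω : ℝ) (X : Fin (n + 1) → ℤ) (C' : Set (Fin (n + 1) → ℝ)),
        Finset.univ.gcd X = 1 →
        H₀ ≤ vNorm (fun i => ((X i : ℝ))) →
        mvNorm (vWedge (yTheta θ) (vecToMulti fun i => ((X i : ℝ))))
          ≤ vNorm (fun i => ((X i : ℝ))) ^ (-ω) →
        C' = {z : Fin (n + 1) → ℝ |
          vNorm z ≤ vNorm (fun i => ((X i : ℝ))) ∧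
          mvNorm (vWedge (yTheta θ) (vecToMulti z))
            ≤ vNorm (fun i => ((X i : ℝ))) ^ (-ω)} →
        (fun i => ((X i : ℝ))) ∈ C' →
        succMin n C' 1 = 1 →
        succMin n C' 2 ≤ C * vNorm (fun i => ((X i : ℝ))) ^ (ω - w_hat) := by
  obtain ⟨C, H₀, hC, hH₀, hshort⟩ := exists_short_approx_vector hw_hat
  refine ⟨C, H₀, hC, hH₀, fun ω X C' hX hH hXω hC' _ hmin => ?_⟩
  set R := vNorm fun i => (X i : ℝ)
  have hR : 0 < R := hH₀.trans_le hH
  obtain ⟨x, hx0, hxR, hxw⟩ := hshort R hH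
  subst hC'
  refine succMin_two_le_of_short_vector hX hR hXω hmin hx0 hxR ?_ (by positivity)
  calc mvNorm (vWedge (yTheta θ) (vecToMulti fun i => (x i : ℝ))) ≤ C * R ^ (-w_hat) := hxw
    _ = C * R ^ (ω - w_hat) * R ^ (-ω) := by
        rw [mul_assoc, ← Real.rpow_add hR]; ring_nf

/-- **Estimate (5.4).** Let `w_hat < ω̂_0(Θ)`. There are constants `C > 0` and `H₀ > 0`,
depending only on `n`, `Θ` and `w_hat`, such that: for every real `ω` and every primitive
`X ∈ ℤ^{n+1}` with `|X| ≥ H₀` and `|y ∧ X| ≤ |X|^{-ω}`, at which the symmetric convex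
body `C' = {z ∈ ℝ^{n+1} : |z| ≤ |X|, |y ∧ z| ≤ |X|^{-ω}}` attains its first successive
minimum (w.r.t. `ℤ^{n+1}`) equal to `1`, the second successive minimum `λ'₂` of `C'`
satisfies `λ'₂ ≤ C |X|^{ω - w_hat}`. -/
theorem estimate_5_4 (n : ℕ) (hn : 0 < n) (θ : Fin n → ℝ)
    (hθ : LinearIndependent ℚ (Fin.cons (1 : ℝ) θ))
    (w_hat : ℝ) (hw_hat : (w_hat : EReal) < omegaHat0 n θ) :
    ∃ C H₀ : ℝ, 0 < C ∧ 0 < H₀ ∧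
      ∀ (ω : ℝ) (X : Fin (n + 1) → ℤ) (C' : Set (Fin (n + 1) → ℝ)),
        Finset.univ.gcd X = 1 →
        H₀ ≤ vNorm (fun i => ((X i : ℝ))) →
        mvNorm (vWedge (yTheta θ) (vecToMulti fun i => ((X i : ℝ))))
          ≤ vNorm (fun i => ((X i : ℝ))) ^ (-ω) →
        C' = {z : Fin (n + 1) → ℝ |
          vNorm z ≤ vNorm (fun i => ((X i : ℝ))) ∧
          mvNorm (vWedge (yTheta θ) (vecToMulti z))
            ≤ vNorm (fun i => ((X i : ℝ))) ^ (-ω)} →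
        (fun i => ((X i : ℝ))) ∈ C' →
        succMin n C' 1 = 1 →
        succMin n C' 2 ≤ C * vNorm (fun i => ((X i : ℝ))) ^ (ω - w_hat) :=
  estimate_5_4_general n θ w_hat hw_hat
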